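/- arXiv:2305.15784 — 2 statements merged into one kernel-verified Lean document; each statement's English description precedes it below -/
import Mathlib

section
/- Let N ≥ 2. If 16 divides N, then the (N/4 mod N)-monomial minimal solution of (E_N) is reducible. If p is an odd prime such that p² divides N, then the (N/p mod N)-monomial minimal solution of (E_N) is reducible. In both cases, N is monomially reducible. -/
open Matrix

/-- The elementary matrix `[[a, -1], [1, 0]]` over `ZMod N`. -/
def genMat {N : ℕ} (a : ZMod N) : Matrix (Fin 2) (Fin 2) (ZMod N) :=
  !![a, -1; 1, 0]

/-- `Mword [a₁, …, aₙ]` is the matrix `Mₙ(a₁, …, aₙ) = genMat aₙ * ⋯ * genMat a₁`. -/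
def Mword {N : ℕ} (l : List (ZMod N)) : Matrix (Fin 2) (Fin 2) (ZMod N) :=
  (l.reverse.map genMat).prod

/-- A tuple (encoded as a list) is a solution of `(E_N)` if its matrix is `±Id`. -/
def IsSolutionE {N : ℕ} (l : List (ZMod N)) : Prop :=
  Mword l = 1 ∨ Mword l = -1

/-- The size of the `k`-monomial minimal solution of `(E_N)`: the least positive `n`
such that the constant `n`-tuple `(k, …, k)` is a solution of `(E_N)`. -/
noncomputable def monomialSize (N : ℕ) (k : ZMod N) : ℕ :=
  sInf {n : ℕ | 0 < n ∧ IsSolutionE (List.replicate n k)}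

/-- The `k`-monomial minimal solution of `(E_N)`. -/
noncomputable def monoSol (N : ℕ) (k : ZMod N) : List (ZMod N) :=
  List.replicate (monomialSize N k) k

/-- The sum `⊕` of two tuples:
`(a₁,…,aₘ) ⊕ (b₁,…,bₗ) = (a₁+bₗ, a₂, …, aₘ₋₁, aₘ+b₁, b₂, …, bₗ₋₁)`. -/
def oplus {N : ℕ} (a b : List (ZMod N)) : List (ZMod N) :=
  (a.headD 0 + b.getLastD 0) ::
    ((a.drop 1).dropLast ++ (a.getLastD 0 + b.headD 0) :: (b.drop 1).dropLast)

/-- Two tuples are equivalent (`∼`) if one is obtained from the other by a cyclic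
permutation, possibly composed with order reversal. -/
def TupEquiv {N : ℕ} (c d : List (ZMod N)) : Prop :=
  (∃ i, d = c.rotate i) ∨ (∃ i, d = c.reverse.rotate i)

/-- A tuple is reducible if it is equivalent to a sum `a ⊕ b` where `b` is a solution of
`(E_N)` and both `a`, `b` have length at least `3`. -/
def IsReducibleE {N : ℕ} (c : List (ZMod N)) : Prop :=
  ∃ a b : List (ZMod N), 3 ≤ a.length ∧ 3 ≤ b.length ∧ IsSolutionE b ∧
    TupEquiv c (oplus a b)

/-- An irreducible solution of `(E_N)`: a solution of size at least `3` that is not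
reducible (the solution `(0,0)` is not considered irreducible). -/
def IsIrreducibleE {N : ℕ} (c : List (ZMod N)) : Prop :=
  IsSolutionE c ∧ 3 ≤ c.length ∧ ¬ IsReducibleE c

/-- A reducible solution of `(E_N)`: a solution that is not irreducible. -/
def IsReducibleSol {N : ℕ} (c : List (ZMod N)) : Prop :=
  IsSolutionE c ∧ ¬ IsIrreducibleE c

/-- `N` is monomially irreducible if for every nonzero `k ∈ ZMod N` the `k`-monomial
minimal solution of `(E_N)` is irreducible. -/
def MonomiallyIrreducible (N : ℕ) : Prop :=
  ∀ k : ZMod N, k ≠ 0 → IsIrreducibleE (monoSol N k)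

/-- `N` is quasi monomially irreducible if for every integer `k` coprime to `N` the
`(k mod N)`-monomial minimal solution of `(E_N)` is irreducible. -/
def QuasiMonomiallyIrreducible (N : ℕ) : Prop :=
  ∀ k : ℤ, Int.gcd k (N : ℤ) = 1 → IsIrreducibleE (monoSol N (k : ZMod N))

/-- `N` is semi monomially irreducible: if `N` is even but not divisible by `4`, this
requires that for every integer `a` coprime to `N/2` the `(2a mod N)`-monomial minimal
solution of `(E_N)` is irreducible; otherwise (i.e. `N` odd or divisible by `4`), it
requires the same for every integer `a` coprime to `N`. -/
def SemiMonomiallyIrreducible (N : ℕ) : Prop :=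
  if 2 ∣ N ∧ ¬ (4 ∣ N) then
    ∀ a : ℤ, Int.gcd a ((N / 2 : ℕ) : ℤ) = 1 →
      IsIrreducibleE (monoSol N ((2 * a : ℤ) : ZMod N))
  else
    ∀ a : ℤ, Int.gcd a (N : ℤ) = 1 →
      IsIrreducibleE (monoSol N ((2 * a : ℤ) : ZMod N))


/-!
If `d ≥ 3` and `d² ∣ N`, then `k = N/d` satisfies `k² = 0` in `ZMod N` and has additive order `d`.
For such `k`, `genMat k ^ 2 = -1 - k • !![0, 1; -1, 0]`, hence
`genMat k ^ (2m) = (-1)^m (1 + m k !![0, 1; -1, 0])`, while odd powers have a unit off the diagonal.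
So the `k`-monomial minimal solution has size `2d ≥ 6`, and it splits as
`(k, …, k) = (2k, k, …, k, 2k) ⊕ (-k, k, k, -k)`, where `(-k, k, k, -k)` is a solution because `k² = 0`.
-/

variable {N : ℕ} {k : ZMod N}

theorem Mword_replicate (n : ℕ) : Mword (List.replicate n k) = genMat k ^ n := by
  simp [Mword, List.prod_replicate]

theorem genMat_mul_self (hk : k * k = 0) : genMat k * genMat k = !![-1, -k; k, -1] := by
  ext i j
  fin_cases i <;> fin_cases j <;> simp [genMat, hk]

theorem genMat_pow_two_mul (hk : k * k = 0) (m : ℕ) :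
    genMat k ^ (2 * m) = (-1 : ZMod N) ^ m • !![1, m * k; -(m * k), 1] := by
  induction m with
  | zero => simp [one_fin_two]
  | succ m ih =>
    rw [mul_add, mul_one, pow_add, ih, pow_two, genMat_mul_self hk]
    ext i j
    fin_cases i <;> fin_cases j <;> simp [pow_succ] <;>
      first | ring1 | linear_combination (m * (-1) ^ m) * hk

theorem genMat_pow_two_mul_add_one_apply (hk : k * k = 0) (m : ℕ) :
    (genMat k ^ (2 * m + 1)) 0 1 = -(-1) ^ m := by
  rw [pow_succ, genMat_pow_two_mul hk]
  simp [genMat, mul_apply]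

theorem isSolutionE_replicate_iff [Nontrivial (ZMod N)] (hk : k * k = 0) (n : ℕ) :
    IsSolutionE (List.replicate n k) ↔ ∃ m, n = 2 * m ∧ m • k = 0 := by
  have hpm : ∀ M : Matrix (Fin 2) (Fin 2) (ZMod N), M = 1 ∨ M = -1 → M 0 1 = 0 := by
    rintro M (rfl | rfl) <;> simp
  rw [IsSolutionE, Mword_replicate]
  constructor
  · intro hsol
    obtain ⟨m, rfl | rfl⟩ := Nat.even_or_odd' n
    · refine ⟨m, rfl, ?_⟩
      simpa [genMat_pow_two_mul hk, nsmul_eq_mul] using hpm _ hsol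
    · have := hpm _ hsol
      rw [genMat_pow_two_mul_add_one_apply hk, neg_eq_zero] at this
      exact absurd this (isUnit_one.neg.pow m).ne_zero
  · rintro ⟨m, rfl, hm⟩
    rw [genMat_pow_two_mul hk, ← nsmul_eq_mul, hm]
    rcases neg_one_pow_eq_or (ZMod N) m with h | h <;> simp [h, one_fin_two]

theorem monomialSize_eq (hN : 2 ≤ N) (hk : k * k = 0) : monomialSize N k = 2 * addOrderOf k := by
  have : NeZero N := ⟨by omega⟩
  have : Fact (1 < N) := ⟨hN⟩
  have ho : 0 < addOrderOf k := addOrderOf_pos k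
  refine IsLeast.csInf_eq ⟨?_, ?_⟩
  · exact ⟨by omega, (isSolutionE_replicate_iff hk _).2 ⟨_, rfl, addOrderOf_nsmul_eq_zero k⟩⟩
  · rintro n ⟨hn, hsol⟩
    obtain ⟨m, rfl, hm⟩ := (isSolutionE_replicate_iff hk n).1 hsol
    have := Nat.le_of_dvd (by omega) (addOrderOf_dvd_of_nsmul_eq_zero hm)
    omega

theorem isSolutionE_monoSol (hN : 2 ≤ N) (hk : k * k = 0) : IsSolutionE (monoSol N k) := by
  have : Fact (1 < N) := ⟨hN⟩
  rw [monoSol, monomialSize_eq hN hk, isSolutionE_replicate_iff hk]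
  exact ⟨_, rfl, addOrderOf_nsmul_eq_zero k⟩

theorem Mword_neg_self_self_neg (hk : k * k = 0) : Mword [-k, k, k, -k] = 1 := by
  ext i j
  fin_cases i <;> fin_cases j <;> simp [Mword, genMat, mul_apply, hk]

theorem replicate_eq_oplus (k : ZMod N) {n : ℕ} (hn : 4 ≤ n) :
    List.replicate n k = oplus (2 * k :: (List.replicate (n - 4) k ++ [2 * k])) [-k, k, k, -k] := by
  obtain ⟨n, rfl⟩ := Nat.exists_eq_add_of_le' hn
  have h : 2 * k + -k = k := by ring
  simp only [List.replicate_succ, oplus, add_tsub_cancel_right, List.headD_eq_head?_getD,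
    List.head?_cons, Option.getD_some, List.getLastD_eq_getLast?, List.getLast?_cons,
    List.getLast?_nil, Option.getD_none, h, List.drop_succ_cons, List.drop_zero, ne_eq,
    List.cons_ne_self, not_false_eq_true, List.dropLast_append_of_ne_nil, List.dropLast_singleton,
    List.append_nil, List.getLast?_append, Option.some_or, List.dropLast_cons_cons, List.cons.injEq,
    true_and]
  rw [show [k, k, k] = List.replicate 3 k from rfl, List.replicate_append_replicate, add_comm,
    ← List.replicate_append_replicate]
  rfl

theorem isReducibleE_replicate (hk : k * k = 0) {n : ℕ} (hn : 5 ≤ n) :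
    IsReducibleE (List.replicate n k) := by
  refine ⟨2 * k :: (List.replicate (n - 4) k ++ [2 * k]), _, ?_, by simp,
    Or.inl (Mword_neg_self_self_neg hk), Or.inl ⟨0, ?_⟩⟩
  · simp only [List.length_cons, List.length_append, List.length_replicate, List.length_nil]
    omega
  · rw [List.rotate_zero, ← replicate_eq_oplus k (by omega)]

theorem isReducibleSol_monoSol (hN : 2 ≤ N) (hk : k * k = 0) (hk3 : 3 ≤ addOrderOf k) :
    IsReducibleSol (monoSol N k) := by
  refine ⟨isSolutionE_monoSol hN hk, fun hirr => hirr.2.2 ?_⟩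
  rw [monoSol, monomialSize_eq hN hk]
  exact isReducibleE_replicate hk (by omega)

theorem not_monomiallyIrreducible (hN : 2 ≤ N) (hk : k * k = 0) (hk3 : 3 ≤ addOrderOf k) :
    ¬ MonomiallyIrreducible N := fun h =>
  (isReducibleSol_monoSol hN hk hk3).2 (h k (by rintro rfl; simp at hk3))

theorem addOrderOf_natCast_div {d : ℕ} (hN : N ≠ 0) (hd : d ∣ N) :
    addOrderOf ((N / d : ℕ) : ZMod N) = d := by
  rw [ZMod.addOrderOf_coe _ hN, Nat.gcd_eq_right (Nat.div_dvd_of_dvd hd), Nat.div_div_self hd hN]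

theorem natCast_div_mul_self {d : ℕ} (hN : N ≠ 0) (hd : d ^ 2 ∣ N) :
    ((N / d : ℕ) : ZMod N) * ((N / d : ℕ) : ZMod N) = 0 := by
  obtain ⟨t, rfl⟩ := hd
  have hd0 : 0 < d := Nat.pos_of_ne_zero (by rintro rfl; simp at hN)
  rw [← Nat.cast_mul, ZMod.natCast_eq_zero_iff]
  refine ⟨t, ?_⟩
  rw [pow_two, mul_assoc, Nat.mul_div_cancel_left _ hd0]
  ring

theorem monomiallyReducible_of_sq_dvd {d : ℕ} (hN : N ≠ 0) (hd : 3 ≤ d) (hdN : d ^ 2 ∣ N) :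
    IsReducibleSol (monoSol N ((N / d : ℕ) : ZMod N)) ∧ ¬ MonomiallyIrreducible N := by
  have hN2 : 2 ≤ N := by
    have := Nat.le_of_dvd (Nat.pos_of_ne_zero hN) hdN
    nlinarith
  have hk := natCast_div_mul_self hN hdN
  have hk3 : 3 ≤ addOrderOf ((N / d : ℕ) : ZMod N) := by
    rwa [addOrderOf_natCast_div hN (Dvd.dvd.trans (dvd_pow_self d two_ne_zero) hdN)]
  exact ⟨isReducibleSol_monoSol hN2 hk hk3, not_monomiallyIrreducible hN2 hk hk3⟩

/-- if `16 ∣ N` then the `(N/4 mod N)`-monomial minimal solution of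
`(E_N)` is reducible; if `p` is an odd prime with `p² ∣ N` then the `(N/p mod N)`-monomial
minimal solution of `(E_N)` is reducible; in both cases `N` is monomially reducible. -/
theorem stmt_12 (N : ℕ) (hN : 2 ≤ N) :
    (16 ∣ N →
      IsReducibleSol (monoSol N ((N / 4 : ℕ) : ZMod N)) ∧ ¬ MonomiallyIrreducible N) ∧
    (∀ p : ℕ, p.Prime → Odd p → p ^ 2 ∣ N →
      IsReducibleSol (monoSol N ((N / p : ℕ) : ZMod N)) ∧ ¬ MonomiallyIrreducible N) := by
  have hN0 : N ≠ 0 := by omega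
  refine ⟨fun h16 => monomiallyReducible_of_sq_dvd (d := 4) hN0 (by norm_num) h16, ?_⟩
  intro p hp hodd hpN
  have hp3 : 3 ≤ p := hp.two_le.lt_of_ne (by rintro rfl; exact absurd hodd (by decide))
  exact monomiallyReducible_of_sq_dvd hN0 hp3 hpN
end

section
/- Every integer of the form N = 2^n·3^m ≥ 2 (with n, m ≥ 0) is quasi monomially irreducible; that is, for every integer k coprime to N, the (k mod N)-monomial minimal solution of (E_N) is irreducible. -/
open Matrix

/-!
Write `K = genMat k`. If the `k`-monomial minimal solution, of size `s`, were reducible, one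
summand would be a solution `(x, k, …, k, y)` with `j` middle entries, `1 ≤ j ≤ s - 3`. The
bottom-right entry of `genMat y * K ^ j * genMat x = ±1` gives `(K ^ j)₀₀ = ε = ±1`, hence
`K ^ (j + 1) = ε K + q`, and `det K = 1` forces `q (q + ε k) = 0`. As `k` is prime to `N`,
modulo each prime power factor of `N` either `q` or `q + ε k` vanishes. If `q = 0` modulo `N`
then `K ^ j = ±1`, and if `q + ε k = 0` then `K ^ (j + 2) = ±1`: both contradict the minimality
of `s`. The mixed case is impossible for `N = 2 ^ n 3 ^ m`: modulo `2` and modulo `3` every unit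
`k` is `±1`, so `K ^ 3 = ∓1` and the sizes of monomial solutions are multiples of `3`, whereas
the two alternatives give the sizes `j` and `j + 2`.
-/

section GenMat

variable {M : ℕ}

lemma det_genMat (a : ZMod M) : (genMat a).det = 1 := by
  simp [genMat, det_fin_two_of]

lemma isUnit_genMat (a : ZMod M) : IsUnit (genMat a) :=
  (isUnit_iff_isUnit_det _).mpr (by simp [det_genMat])

lemma genMat_sq (a : ZMod M) : genMat a ^ 2 = a • genMat a - 1 := by
  ext i j
  fin_cases i <;> fin_cases j <;> simp [sq, genMat, mul_apply, Fin.sum_univ_two, sub_eq_add_neg]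

lemma smul_genMat_add_smul_one (a p q : ZMod M) :
    p • genMat a + q • (1 : Matrix (Fin 2) (Fin 2) (ZMod M)) = !![p * a + q, -p; p, q] := by
  ext i j
  fin_cases i <;> fin_cases j <;> simp [genMat]

lemma genMat_pow_succ (a : ZMod M) (t : ℕ) :
    genMat a ^ (t + 1) = (genMat a ^ t) 0 0 • genMat a + (genMat a ^ t) 0 1 • 1 := by
  induction t with
  | zero => simp
  | succ t ih =>
    have h00 : (genMat a ^ (t + 1)) 0 0 = (genMat a ^ t) 0 0 * a + (genMat a ^ t) 0 1 := by
      rw [ih, smul_genMat_add_smul_one]; simp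
    have h01 : (genMat a ^ (t + 1)) 0 1 = -(genMat a ^ t) 0 0 := by
      rw [ih, smul_genMat_add_smul_one]; simp
    rw [h00, h01, pow_succ, ih, add_mul, smul_mul_assoc, smul_mul_assoc, one_mul, ← sq,
      genMat_sq]
    module

lemma genMat_mul_mul_genMat_apply_one_one (x y : ZMod M)
    (A : Matrix (Fin 2) (Fin 2) (ZMod M)) :
    (genMat y * A * genMat x) 1 1 = -A 0 0 := by
  simp [genMat, mul_apply, Fin.sum_univ_two, vecMul, dotProduct]

end GenMat

section Solutions

variable {M : ℕ}

lemma smul_one_eq_one_or_neg_one {c : ZMod M} (hc : c = 1 ∨ c = -1) :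
    c • (1 : Matrix (Fin 2) (Fin 2) (ZMod M)) = 1 ∨
      c • (1 : Matrix (Fin 2) (Fin 2) (ZMod M)) = -1 := by
  rcases hc with rfl | rfl <;> simp

lemma Mword_replicate_s14 (a : ZMod M) (r : ℕ) : Mword (List.replicate r a) = genMat a ^ r := by
  simp [Mword, List.prod_replicate]

lemma isSolutionE_replicate_iff_s14 (a : ZMod M) (r : ℕ) :
    IsSolutionE (List.replicate r a) ↔ genMat a ^ r = 1 ∨ genMat a ^ r = -1 := by
  rw [IsSolutionE, Mword_replicate_s14]

lemma Mword_cons_replicate_append_singleton (x y a : ZMod M) (j : ℕ) :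
    Mword (x :: List.replicate j a ++ [y]) = genMat y * genMat a ^ j * genMat x := by
  simp [Mword, List.prod_replicate, mul_assoc]

lemma not_isSolutionE_replicate_of_lt_three {a : ZMod M} (ha : a ≠ 0) {r : ℕ} (hr0 : 0 < r)
    (hr3 : r < 3) : ¬ IsSolutionE (List.replicate r a) := by
  have : Nontrivial (ZMod M) := ⟨⟨a, 0, ha⟩⟩
  rw [isSolutionE_replicate_iff_s14]
  rintro h
  have h01 : (genMat a ^ r) 0 1 = 0 := by rcases h with h | h <;> simp [h]
  interval_cases r <;> simp [genMat, sq, mul_apply, Fin.sum_univ_two] at h01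
  exact ha h01

lemma three_dvd_of_isSolutionE_replicate {a : ZMod M} (ha0 : a ≠ 0) (ha : a = 1 ∨ a = -1)
    {r : ℕ} (h : IsSolutionE (List.replicate r a)) : 3 ∣ r := by
  have hcube : genMat a ^ 3 = (-a) • 1 := by
    rw [pow_succ, genMat_sq]
    rcases ha with rfl | rfl <;> ext i j <;> fin_cases i <;> fin_cases j <;>
      simp [genMat, mul_apply, Fin.sum_univ_two]
  induction r using Nat.strong_induction_on with
  | _ r ih =>
    rcases Nat.lt_or_ge r 3 with hr | hr
    · rcases Nat.eq_zero_or_pos r with rfl | hr0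
      · exact dvd_zero 3
      · exact absurd h (not_isSolutionE_replicate_of_lt_three ha0 hr0 hr)
    · obtain ⟨r, rfl⟩ := Nat.exists_eq_add_of_le hr
      suffices IsSolutionE (List.replicate r a) by simpa using ih r (by omega) this
      have hpow : genMat a ^ r = (-a) • genMat a ^ (3 + r) := by
        rw [pow_add, hcube, smul_one_mul, smul_smul]
        rcases ha with rfl | rfl <;> simp
      rw [isSolutionE_replicate_iff_s14] at h ⊢
      rw [hpow]
      rcases ha with rfl | rfl <;> rcases h with h | h <;> simp [h]

lemma genMat_pow_apply_zero_zero_of_isSolutionE {x y a : ZMod M} {j : ℕ}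
    (h : IsSolutionE (x :: List.replicate j a ++ [y])) :
    (genMat a ^ j) 0 0 = 1 ∨ (genMat a ^ j) 0 0 = -1 := by
  rw [IsSolutionE, Mword_cons_replicate_append_singleton] at h
  have h11 := genMat_mul_mul_genMat_apply_one_one x y (genMat a ^ j)
  rcases h with h | h <;> rw [h] at h11
  · rw [one_apply_eq] at h11
    exact .inr (neg_eq_iff_eq_neg.mp h11.symm)
  · rw [Matrix.neg_apply, one_apply_eq, neg_inj] at h11
    exact .inl h11.symm

end Solutions

section PowerRelation

variable {M : ℕ} {k : ℤ} {t : ℕ}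

lemma exists_genMat_pow_succ_eq
    (h00 : (genMat (k : ZMod M) ^ t) 0 0 = 1 ∨ (genMat (k : ZMod M) ^ t) 0 0 = -1) :
    ∃ ε q : ℤ, (ε = 1 ∨ ε = -1) ∧
      genMat (k : ZMod M) ^ (t + 1) = (ε : ZMod M) • genMat (k : ZMod M) + (q : ZMod M) • 1 ∧
      (M : ℤ) ∣ q * (q + ε * k) := by
  obtain ⟨ε, hε, hε00⟩ :
      ∃ ε : ℤ, (ε = 1 ∨ ε = -1) ∧ (ε : ZMod M) = (genMat (k : ZMod M) ^ t) 0 0 := by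
    rcases h00 with h | h
    · exact ⟨1, .inl rfl, by simp [h]⟩
    · exact ⟨-1, .inr rfl, by simp [h]⟩
  obtain ⟨q, hq01⟩ := ZMod.intCast_surjective ((genMat (k : ZMod M) ^ t) 0 1)
  have hrel := genMat_pow_succ (k : ZMod M) t
  rw [← hε00, ← hq01] at hrel
  refine ⟨ε, q, hε, hrel, ?_⟩
  have hdet := congrArg det hrel
  rw [det_pow, det_genMat, one_pow, smul_genMat_add_smul_one, det_fin_two_of] at hdet
  rw [← ZMod.intCast_zmod_eq_zero_iff_dvd]
  have hε2 : (ε : ZMod M) * ε = 1 := by rcases hε with rfl | rfl <;> simp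
  push_cast
  linear_combination -hdet - hε2

variable {ε q : ℤ}

lemma isSolutionE_replicate_of_genMat_pow_succ_eq (hε : ε = 1 ∨ ε = -1)
    (hrel : genMat (k : ZMod M) ^ (t + 1) =
      (ε : ZMod M) • genMat (k : ZMod M) + (q : ZMod M) • 1)
    (hq : (M : ℤ) ∣ q) : IsSolutionE (List.replicate t (k : ZMod M)) := by
  rw [(ZMod.intCast_zmod_eq_zero_iff_dvd q M).mpr hq, zero_smul, add_zero, pow_succ,
    ← smul_one_mul, (isUnit_genMat _).mul_left_inj] at hrel
  rw [isSolutionE_replicate_iff_s14, hrel]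
  exact smul_one_eq_one_or_neg_one (by rcases hε with rfl | rfl <;> simp)

lemma isSolutionE_replicate_add_two_of_genMat_pow_succ_eq (hε : ε = 1 ∨ ε = -1)
    (hrel : genMat (k : ZMod M) ^ (t + 1) =
      (ε : ZMod M) • genMat (k : ZMod M) + (q : ZMod M) • 1)
    (hq : (M : ℤ) ∣ q + ε * k) : IsSolutionE (List.replicate (t + 2) (k : ZMod M)) := by
  have hq' : (q : ZMod M) = -(ε * k) := by
    rw [eq_neg_iff_add_eq_zero]; exact_mod_cast (ZMod.intCast_zmod_eq_zero_iff_dvd _ M).mpr hq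
  have hpow : genMat (k : ZMod M) ^ (t + 2) = (-ε : ZMod M) • 1 := by
    rw [pow_succ, hrel, hq', add_mul, smul_mul_assoc, smul_mul_assoc, one_mul, ← sq, genMat_sq]
    module
  rw [isSolutionE_replicate_iff_s14, hpow]
  exact smul_one_eq_one_or_neg_one (by rcases hε with rfl | rfl <;> simp)

lemma genMat_pow_succ_eq_of_dvd {d : ℕ} (hd : d ∣ M)
    (hrel : genMat (k : ZMod M) ^ (t + 1) =
      (ε : ZMod M) • genMat (k : ZMod M) + (q : ZMod M) • 1) :
    genMat (k : ZMod d) ^ (t + 1) = (ε : ZMod d) • genMat (k : ZMod d) + (q : ZMod d) • 1 := by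
  set f := ZMod.castHom hd (ZMod d)
  have hmap : ∀ a : ℤ, (genMat (a : ZMod M)).map f = genMat (a : ZMod d) := by
    intro a
    ext i j
    fin_cases i <;> fin_cases j <;> simp [f, genMat, -ZMod.castHom_apply]
  have h := congrArg (Matrix.map · f) hrel
  simp only [Matrix.map_pow, Matrix.map_add f (map_add f), Matrix.map_smul' f _ _ (map_mul f),
    Matrix.map_one f (map_zero f) (map_one f), hmap, map_intCast] at h
  exact h

lemma three_dvd_of_genMat_pow_succ_eq {p : ℕ} (hp : ∀ a : ZMod p, a ≠ 0 → a = 1 ∨ a = -1)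
    (hpM : p ∣ M) (hk : ¬ (p : ℤ) ∣ k) (hε : ε = 1 ∨ ε = -1)
    (hrel : genMat (k : ZMod M) ^ (t + 1) =
      (ε : ZMod M) • genMat (k : ZMod M) + (q : ZMod M) • 1) :
    ((p : ℤ) ∣ q → 3 ∣ t) ∧ ((p : ℤ) ∣ q + ε * k → 3 ∣ t + 2) := by
  have hk0 : (k : ZMod p) ≠ 0 := by rwa [Ne, ZMod.intCast_zmod_eq_zero_iff_dvd]
  have hrel' := genMat_pow_succ_eq_of_dvd hpM hrel
  exact ⟨fun hq => three_dvd_of_isSolutionE_replicate hk0 (hp _ hk0)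
      (isSolutionE_replicate_of_genMat_pow_succ_eq hε hrel' hq),
    fun hq => three_dvd_of_isSolutionE_replicate hk0 (hp _ hk0)
      (isSolutionE_replicate_add_two_of_genMat_pow_succ_eq hε hrel' hq)⟩

end PowerRelation

lemma pow_dvd_or_pow_dvd_add_of_dvd_mul {p x w : ℤ} (hp : Prime p) {a : ℕ}
    (hw : IsCoprime (p ^ a) w) (h : p ^ a ∣ x * (x + w)) : p ^ a ∣ x ∨ p ^ a ∣ x + w := by
  rcases a.eq_zero_or_pos with rfl | ha
  · simp
  by_cases hx : p ∣ x
  · refine .inl (hp.pow_dvd_of_dvd_mul_right a (fun hxw => ?_) h)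
    exact hp.not_isUnit (hw.isUnit_of_dvd' (dvd_pow_self p ha.ne') (by simpa using dvd_sub hxw hx))
  · exact .inr (hp.pow_dvd_of_dvd_mul_left a hx h)

lemma dvd_or_dvd_add_of_genMat_pow_succ_eq {n m : ℕ} {k ε q : ℤ} {t : ℕ}
    (hk : IsCoprime k (2 ^ n * 3 ^ m)) (hε : ε = 1 ∨ ε = -1)
    (hrel : genMat (k : ZMod (2 ^ n * 3 ^ m)) ^ (t + 1) =
      (ε : ZMod (2 ^ n * 3 ^ m)) • genMat (k : ZMod (2 ^ n * 3 ^ m)) +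
        (q : ZMod (2 ^ n * 3 ^ m)) • 1)
    (hdvd : ((2 ^ n * 3 ^ m : ℕ) : ℤ) ∣ q * (q + ε * k)) :
    ((2 ^ n * 3 ^ m : ℕ) : ℤ) ∣ q ∨ ((2 ^ n * 3 ^ m : ℕ) : ℤ) ∣ q + ε * k := by
  push_cast at hdvd ⊢
  have hw : IsCoprime (ε * k) (2 ^ n * 3 ^ m) := by
    rcases hε with rfl | rfl <;> simp [IsCoprime.neg_left_iff, hk]
  have h2 := pow_dvd_or_pow_dvd_add_of_dvd_mul Int.prime_two hw.of_mul_right_left.symm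
    (dvd_trans (dvd_mul_right _ _) hdvd)
  have h3 := pow_dvd_or_pow_dvd_add_of_dvd_mul Int.prime_three hw.of_mul_right_right.symm
    (dvd_trans (dvd_mul_left _ _) hdvd)
  have hndvd {p : ℤ} {a : ℕ} (hp : Prime p) (ha : 0 < a) (hkp : IsCoprime k (p ^ a)) :
      ¬ p ∣ k :=
    fun h => hp.not_isUnit (hkp.isUnit_of_dvd' h (dvd_pow_self p ha.ne'))
  have mod2 (hn : 0 < n) := three_dvd_of_genMat_pow_succ_eq (p := 2) (by decide)
    (dvd_mul_of_dvd_left (dvd_pow_self 2 hn.ne') _)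
    (hndvd Int.prime_two hn hk.of_mul_right_left) hε hrel
  have mod3 (hm : 0 < m) := three_dvd_of_genMat_pow_succ_eq (p := 3) (by decide)
    (dvd_mul_of_dvd_right (dvd_pow_self 3 hm.ne') _)
    (hndvd Int.prime_three hm hk.of_mul_right_right) hε hrel
  have hcop : IsCoprime ((2 : ℤ) ^ n) (3 ^ m) := (Int.isCoprime_iff_gcd_eq_one.mpr rfl).pow
  rcases h2 with h2 | h2 <;> rcases h3 with h3 | h3
  · exact .inl (hcop.mul_dvd h2 h3)
  · rcases n.eq_zero_or_pos with rfl | hn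
    · simpa using Or.inr h3
    rcases m.eq_zero_or_pos with rfl | hm
    · simpa using Or.inl h2
    have := (mod2 hn).1 (dvd_trans (dvd_pow_self 2 hn.ne') h2)
    have := (mod3 hm).2 (dvd_trans (dvd_pow_self 3 hm.ne') h3)
    omega
  · rcases n.eq_zero_or_pos with rfl | hn
    · simpa using Or.inl h3
    rcases m.eq_zero_or_pos with rfl | hm
    · simpa using Or.inr h2
    have := (mod2 hn).2 (dvd_trans (dvd_pow_self 2 hn.ne') h2)
    have := (mod3 hm).1 (dvd_trans (dvd_pow_self 3 hm.ne') h3)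
    omega
  · exact .inr (hcop.mul_dvd h2 h3)

section MonomialSize

variable {M : ℕ}

lemma exists_isSolutionE_replicate [NeZero M] (a : ZMod M) :
    ∃ r, 0 < r ∧ IsSolutionE (List.replicate r a) := by
  obtain ⟨u, hu⟩ := isUnit_genMat a
  obtain ⟨r, hr, hur⟩ := (isOfFinOrder_of_finite u).exists_pow_eq_one
  refine ⟨r, hr, (isSolutionE_replicate_iff_s14 a r).mpr (.inl ?_)⟩
  rw [← hu, ← Units.val_pow_eq_pow_val, hur, Units.val_one]

lemma isSolutionE_monoSol_s14 [NeZero M] (a : ZMod M) :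
    0 < monomialSize M a ∧ IsSolutionE (monoSol M a) :=
  Nat.sInf_mem (exists_isSolutionE_replicate a)

lemma monomialSize_le {a : ZMod M} {r : ℕ} (hr : 0 < r) (h : IsSolutionE (List.replicate r a)) :
    monomialSize M a ≤ r :=
  Nat.sInf_le ⟨hr, h⟩

lemma three_le_monomialSize [NeZero M] {a : ZMod M} (ha : a ≠ 0) : 3 ≤ monomialSize M a := by
  obtain ⟨hpos, hsol⟩ := isSolutionE_monoSol_s14 a
  by_contra! h
  exact not_isSolutionE_replicate_of_lt_three ha hpos h hsol

lemma exists_isSolutionE_of_isReducibleE_replicate {a : ZMod M} {s : ℕ}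
    (h : IsReducibleE (List.replicate s a)) :
    ∃ x y j, 0 < j ∧ j + 3 ≤ s ∧ IsSolutionE (x :: List.replicate j a ++ [y]) := by
  obtain ⟨c, b, hc, hb, hsol, hequiv⟩ := h
  have hsum : oplus c b = List.replicate s a := by
    rcases hequiv with ⟨i, hi⟩ | ⟨i, hi⟩ <;> simp [hi]
  obtain ⟨x, b, rfl⟩ := List.exists_cons_of_length_pos (by omega : 0 < b.length)
  obtain rfl | ⟨mid, y, rfl⟩ := b.eq_nil_or_concat'
  · simp at hb
  have hmid : mid = List.replicate mid.length a := by
    rw [List.eq_replicate_length]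
    intro z hz
    have hz' : z ∈ oplus c (x :: (mid ++ [y])) := by simp [oplus, hz]
    exact List.eq_of_mem_replicate (hsum ▸ hz')
  have hlen := congrArg List.length hsum
  simp [oplus] at hb hlen
  exact ⟨x, y, mid.length, by omega, by omega, hmid ▸ hsol⟩

end MonomialSize

lemma isSolutionE_replicate_or_of_isSolutionE_cons_replicate_append_singleton {n m : ℕ} {k : ℤ}
    (hk : IsCoprime k (2 ^ n * 3 ^ m)) {x y : ZMod (2 ^ n * 3 ^ m)} {j : ℕ}
    (h : IsSolutionE (x :: List.replicate j (k : ZMod (2 ^ n * 3 ^ m)) ++ [y])) :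
    IsSolutionE (List.replicate j (k : ZMod (2 ^ n * 3 ^ m))) ∨
      IsSolutionE (List.replicate (j + 2) (k : ZMod (2 ^ n * 3 ^ m))) := by
  obtain ⟨ε, q, hε, hrel, hdvd⟩ :=
    exists_genMat_pow_succ_eq (genMat_pow_apply_zero_zero_of_isSolutionE h)
  exact (dvd_or_dvd_add_of_genMat_pow_succ_eq hk hε hrel hdvd).imp
    (isSolutionE_replicate_of_genMat_pow_succ_eq hε hrel)
    (isSolutionE_replicate_add_two_of_genMat_pow_succ_eq hε hrel)

/-- every integer `N = 2^n·3^m ≥ 2` is quasi monomially irreducible. -/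
theorem stmt_14 (n m : ℕ) (h : 2 ≤ 2 ^ n * 3 ^ m) :
    QuasiMonomiallyIrreducible (2 ^ n * 3 ^ m) := by
  intro k hk
  have hcop : IsCoprime k (2 ^ n * 3 ^ m) := by exact_mod_cast Int.isCoprime_iff_gcd_eq_one.mpr hk
  have hk0 : (k : ZMod (2 ^ n * 3 ^ m)) ≠ 0 := by
    rw [Ne, ZMod.intCast_zmod_eq_zero_iff_dvd]
    intro hdvd
    have := Int.isUnit_iff.mp (hcop.isUnit_of_dvd' (by exact_mod_cast hdvd) dvd_rfl)
    have : (2 : ℤ) ≤ 2 ^ n * 3 ^ m := by exact_mod_cast h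
    omega
  obtain ⟨-, hsol⟩ := isSolutionE_monoSol_s14 (k : ZMod (2 ^ n * 3 ^ m))
  refine ⟨hsol, by simpa [monoSol] using three_le_monomialSize hk0, fun hred => ?_⟩
  obtain ⟨x, y, j, hj, hjs, hxy⟩ := exists_isSolutionE_of_isReducibleE_replicate hred
  rcases isSolutionE_replicate_or_of_isSolutionE_cons_replicate_append_singleton hcop hxy with
    hsol' | hsol'
  · have := monomialSize_le hj hsol'; omega
  · have := monomialSize_le (by omega) hsol'; omega
end
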